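/- arXiv:2312.02175 — 5 statements merged into one kernel-verified Lean document; each statement's English description precedes it below -/
import Mathlib

section
/- Let N ≥ 2 and let u ∈ ℂ^N satisfy |u_q| = 1/√N for every q (hence ‖u‖₂ = 1). Fix an index n and define g ∈ ℂ^N by g_n = √((N−1)/N) and, for q ≠ n, g_q = − conj(u_n) / ( conj(u_q) · √(N(N−1)) ). Then ∑_{q=1}^N |g_q|² = 1, ⟨u, g⟩ = ∑_q conj(u_q)·g_q = 0, and |g_n| = √(1 − |u_n|²) = √((N−1)/N). Thus the constructed row attains the maximum possible diagonal value among unit vectors orthogonal to u. -/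
/-- Explicit construction of the row `g_n` of the wavefront-transformation matrix
(Eqs. (47), (53)–(55) of the paper).  If all entries of `u ∈ ℂ^N` have modulus `1/√N`, and
`g n = √((N−1)/N)`, `g q = − conj(u n)/(conj(u q)·√(N(N−1)))` for `q ≠ n`, then `g` is a unit
vector orthogonal to `u` whose `n`-th entry attains the maximum `√(1 − |u n|²) = √((N−1)/N)`. -/
theorem wtmp_row_construction_attains_maximum
    (N : ℕ) (hN : 2 ≤ N) (u : Fin N → ℂ)
    (hu : ∀ q, ‖u q‖ = 1 / Real.sqrt N)
    (n : Fin N) (g : Fin N → ℂ)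
    (hgn : g n = (Real.sqrt (((N : ℝ) - 1) / N) : ℂ))
    (hgq : ∀ q, q ≠ n → g q =
      - (starRingEnd ℂ) (u n) /
        ((starRingEnd ℂ) (u q) * (Real.sqrt ((N : ℝ) * ((N : ℝ) - 1)) : ℂ))) :
    (∑ q, ‖g q‖ ^ 2 = 1) ∧
    (∑ q, (starRingEnd ℂ) (u q) * g q = 0) ∧
    ‖g n‖ = Real.sqrt (1 - ‖u n‖ ^ 2) ∧
    ‖g n‖ = Real.sqrt (((N : ℝ) - 1) / N) := by
  have hN2 : (2:ℝ) ≤ (N:ℝ) := by exact_mod_cast hN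
  have hNpos : (0:ℝ) < N := by linarith
  set s : ℝ := Real.sqrt ((N : ℝ) * ((N : ℝ) - 1)) with hs
  have hspos : 0 < s := Real.sqrt_pos.2 (by nlinarith)
  have hs2 : s ^ 2 = (N:ℝ) * ((N:ℝ) - 1) := Real.sq_sqrt (by nlinarith)
  have hsN : 0 < Real.sqrt (N:ℝ) := Real.sqrt_pos.2 hNpos
  have hu0 : ∀ q, u q ≠ 0 := by
    intro q h
    have h1 := hu q
    rw [h, norm_zero] at h1
    exact (by positivity : (0:ℝ) < 1 / Real.sqrt N).ne' h1.symm
  -- keys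
  have hkey : Real.sqrt (((N:ℝ) - 1) / N) * s = (N:ℝ) - 1 := by
    rw [hs, ← Real.sqrt_mul (div_nonneg (by linarith) hNpos.le)]
    have : ((N:ℝ) - 1) / N * ((N:ℝ) * ((N:ℝ) - 1)) = ((N:ℝ)-1)^2 := by
      field_simp
    rw [this, Real.sqrt_sq (by linarith)]
  have habsgn : ‖g n‖ = Real.sqrt (((N:ℝ) - 1) / N) := by
    rw [hgn, Complex.norm_real, Real.norm_eq_abs, abs_of_nonneg (Real.sqrt_nonneg _)]
  have habsg : ∀ q, q ≠ n → ‖g q‖ = 1 / s := by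
    intro q hq
    rw [hgq q hq, norm_div, norm_neg, norm_mul, Complex.norm_conj,
      Complex.norm_conj, Complex.norm_real, Real.norm_eq_abs, abs_of_pos hspos, hu n, hu q]
    field_simp
  refine ⟨?_, ?_, ?_, habsgn⟩
  · rw [← Finset.sum_erase_add _ _ (Finset.mem_univ n), habsgn,
      Real.sq_sqrt (div_nonneg (by linarith) hNpos.le)]
    have : ∀ q ∈ Finset.univ.erase n, ‖g q‖ ^ 2 = 1 / s ^ 2 := by
      intro q hq
      rw [habsg q (Finset.mem_erase.1 hq).1]
      ring
    rw [Finset.sum_congr rfl this, Finset.sum_const, Finset.card_erase_of_mem (Finset.mem_univ n),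
      Finset.card_univ, Fintype.card_fin, nsmul_eq_mul, hs2]
    have hN1 : ((N - 1 : ℕ) : ℝ) = (N:ℝ) - 1 := by
      have : 1 ≤ N := by omega
      push_cast [this]; ring
    have hNne : (N:ℝ) ≠ 0 := hNpos.ne'
    have hN1ne : (N:ℝ) - 1 ≠ 0 := by linarith
    rw [hN1]
    field_simp
    ring
  · rw [← Finset.sum_erase_add _ _ (Finset.mem_univ n), hgn]
    have hterm : ∀ q ∈ Finset.univ.erase n,
        (starRingEnd ℂ) (u q) * g q = - (starRingEnd ℂ) (u n) / (s : ℂ) := by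
      intro q hq
      rw [hgq q (Finset.mem_erase.1 hq).1]
      have huq : (starRingEnd ℂ) (u q) ≠ 0 := by
        simpa using hu0 q
      have hsC : (s : ℂ) ≠ 0 := Complex.ofReal_ne_zero.2 hspos.ne'
      field_simp
    rw [Finset.sum_congr rfl hterm, Finset.sum_const, Finset.card_erase_of_mem (Finset.mem_univ n),
      Finset.card_univ, Fintype.card_fin, nsmul_eq_mul]
    have hN1 : ((N - 1 : ℕ) : ℂ) = (N:ℂ) - 1 := by
      have : 1 ≤ N := by omega
      push_cast [this]; ring
    have hsC : (s : ℂ) ≠ 0 := Complex.ofReal_ne_zero.2 hspos.ne'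
    have hkeyC : (Real.sqrt (((N:ℝ) - 1) / N) : ℂ) = ((N:ℂ) - 1) / (s:ℂ) := by
      rw [eq_div_iff hsC, ← Complex.ofReal_mul, hkey]
      push_cast
      ring
    rw [hN1, hkeyC]
    ring
  · rw [habsgn, hu n]
    congr 1
    rw [div_pow, one_pow, Real.sq_sqrt hNpos.le]
    field_simp
end

section
/- Let N ≥ 3 be an integer and define J : ℝ → ℝ by J(s) = (1/2)·( √(N(N−2)² s) + √(N(N−2)² s + 2 − 2N(N−1)(N−2) s) ) for s ∈ [0, 2/(N²(N−2))] (on this interval both radicands are nonnegative). Then J(s) ≤ √((N−1)/N) for all s in this interval, and J(1/(N²(N−1))) = √((N−1)/N). In particular the maximum of J is attained at s = x₁² + y₁² = 1/(N³ − N²). -/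
set_option maxHeartbeats 800000


/-- The scalar optimization of Eqs. (52)–(57) of the paper.  For `N ≥ 3` and
`J(s) = (1/2)(√(N(N−2)²s) + √(N(N−2)²s + 2 − 2N(N−1)(N−2)s))` on `[0, 2/(N²(N−2))]`, one has
`J(s) ≤ √((N−1)/N)` with equality at `s = 1/(N²(N−1)) = 1/(N³ − N²)`. -/
theorem wtmp_scalar_optimization (N : ℕ) (hN : 3 ≤ N) :
    (∀ s : ℝ, 0 ≤ s → s ≤ 2 / ((N : ℝ) ^ 2 * ((N : ℝ) - 2)) →
      (1 / 2) * (Real.sqrt ((N : ℝ) * ((N : ℝ) - 2) ^ 2 * s)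
          + Real.sqrt ((N : ℝ) * ((N : ℝ) - 2) ^ 2 * s
              + 2 - 2 * (N : ℝ) * ((N : ℝ) - 1) * ((N : ℝ) - 2) * s))
        ≤ Real.sqrt (((N : ℝ) - 1) / N)) ∧
    (1 / 2) * (Real.sqrt ((N : ℝ) * ((N : ℝ) - 2) ^ 2 * (1 / ((N : ℝ) ^ 2 * ((N : ℝ) - 1))))
        + Real.sqrt ((N : ℝ) * ((N : ℝ) - 2) ^ 2 * (1 / ((N : ℝ) ^ 2 * ((N : ℝ) - 1)))
            + 2 - 2 * (N : ℝ) * ((N : ℝ) - 1) * ((N : ℝ) - 2)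
              * (1 / ((N : ℝ) ^ 2 * ((N : ℝ) - 1)))))
      = Real.sqrt (((N : ℝ) - 1) / N) := by
  have hn : (3:ℝ) ≤ (N:ℝ) := by exact_mod_cast hN
  set n : ℝ := (N:ℝ) with hndef
  have hnpos : (0:ℝ) < n := by linarith
  have hn1 : (0:ℝ) < n - 1 := by linarith
  have hn2 : (0:ℝ) < n - 2 := by linarith
  have hnne : n ≠ 0 := ne_of_gt hnpos
  have hn1ne : n - 1 ≠ 0 := ne_of_gt hn1
  constructor
  · intro s hs0 hs1
    have hden : (0:ℝ) < n ^ 2 * (n - 2) := by positivity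
    have hs1' : s * (n ^ 2 * (n - 2)) ≤ 2 := by
      rw [div_eq_mul_inv] at hs1
      calc s * (n ^ 2 * (n - 2)) ≤ 2 * (n ^ 2 * (n - 2))⁻¹ * (n ^ 2 * (n - 2)) := by
            apply mul_le_mul_of_nonneg_right hs1 (le_of_lt (by positivity))
        _ = 2 := by field_simp
    set A : ℝ := n * (n - 2) ^ 2 * s with hA
    set B : ℝ := n * (n - 2) ^ 2 * s + 2 - 2 * n * (n - 1) * (n - 2) * s with hB
    set M : ℝ := (n - 1) / n with hM
    have hA0 : 0 ≤ A := by positivity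
    have hM0 : 0 ≤ M := by positivity
    have hB0 : 0 ≤ B := by
      have : B = 2 - s * (n ^ 2 * (n - 2)) := by rw [hB]; ring
      rw [this]; linarith
    -- A ≤ 4 M
    have hA4M : A ≤ 4 * M := by
      rw [hA, hM, div_eq_mul_inv]
      have h1 : n * (n - 2) ^ 2 * s * n ≤ 2 * (n - 2) := by nlinarith
      have h2 : 2 * (n - 2) ≤ 4 * (n - 1) := by linarith
      have h3 : n * (n - 2) ^ 2 * s * n ≤ 4 * (n - 1) := le_trans h1 h2
      calc n * (n - 2) ^ 2 * s = (n * (n - 2) ^ 2 * s * n) * n⁻¹ := by field_simp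
        _ ≤ (4 * (n - 1)) * n⁻¹ := by
            apply mul_le_mul_of_nonneg_right h3 (by positivity)
        _ = 4 * ((n - 1) * n⁻¹) := by ring
    have hsqA : Real.sqrt A ≤ 2 * Real.sqrt M := by
      have h4M : (4:ℝ) * M = (2 * Real.sqrt M) ^ 2 := by
        rw [mul_pow, Real.sq_sqrt hM0]; norm_num
      calc Real.sqrt A ≤ Real.sqrt (4 * M) := Real.sqrt_le_sqrt hA4M
        _ = 2 * Real.sqrt M := by rw [h4M, Real.sqrt_sq (by positivity)]
    -- key product bound
    set C : ℝ := (n - 2) / n with hC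
    set D : ℝ := n * (n - 1) * (n - 2) * s with hD
    have hC0 : 0 ≤ C := by positivity
    have hD0 : 0 ≤ D := by positivity
    have hMA : M * A = C * D := by rw [hM, hA, hC, hD]; field_simp
    have hprod : 4 * (M * A) ≤ (C + D) ^ 2 := by
      rw [hMA]; nlinarith [sq_nonneg (C - D)]
    have hsqrtprod : 2 * Real.sqrt (M * A) ≤ C + D := by
      have h1 : Real.sqrt (4 * (M * A)) ≤ C + D := by
        calc Real.sqrt (4 * (M * A)) ≤ Real.sqrt ((C + D) ^ 2) := Real.sqrt_le_sqrt hprod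
          _ = C + D := Real.sqrt_sq (by positivity)
      have h2 : Real.sqrt (4 * (M * A)) = 2 * Real.sqrt (M * A) := by
        rw [show (4:ℝ) * (M * A) = 2 ^ 2 * (M * A) by ring,
          Real.sqrt_mul (by positivity), Real.sqrt_sq (by norm_num)]
      linarith [h2 ▸ h1]
    have hMul : Real.sqrt M * Real.sqrt A = Real.sqrt (M * A) :=
      (Real.sqrt_mul hM0 A).symm
    -- B ≤ (2√M − √A)²
    have hBle : B ≤ (2 * Real.sqrt M - Real.sqrt A) ^ 2 := by
      have h1 : Real.sqrt M ^ 2 = M := Real.sq_sqrt hM0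
      have h2 : Real.sqrt A ^ 2 = A := Real.sq_sqrt hA0
      have hexp : (2 * Real.sqrt M - Real.sqrt A) ^ 2
          = 4 * M + A - 4 * Real.sqrt (M * A) := by
        calc (2 * Real.sqrt M - Real.sqrt A) ^ 2
            = 4 * Real.sqrt M ^ 2 + Real.sqrt A ^ 2
              - 4 * (Real.sqrt M * Real.sqrt A) := by ring
          _ = 4 * M + A - 4 * Real.sqrt (M * A) := by rw [h1, h2, hMul]
      rw [hexp]
      have hid : 4 * M + A - B = 2 * C + 2 * D := by
        rw [hM, hA, hB, hC, hD]; field_simp; ring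
      linarith
    have hsqB : Real.sqrt B ≤ 2 * Real.sqrt M - Real.sqrt A := by
      calc Real.sqrt B ≤ Real.sqrt ((2 * Real.sqrt M - Real.sqrt A) ^ 2) :=
            Real.sqrt_le_sqrt hBle
        _ = 2 * Real.sqrt M - Real.sqrt A := Real.sqrt_sq (by linarith)
    linarith
  · -- equality
    set t : ℝ := (n * (n - 1))⁻¹ with ht
    have ht0 : 0 ≤ t := by positivity
    have e1 : n * (n - 2) ^ 2 * (1 / (n ^ 2 * (n - 1))) = (n - 2) ^ 2 * t := by
      rw [ht]; field_simp
    have e2 : n * (n - 2) ^ 2 * (1 / (n ^ 2 * (n - 1))) + 2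
        - 2 * n * (n - 1) * (n - 2) * (1 / (n ^ 2 * (n - 1))) = n ^ 2 * t := by
      rw [ht]; field_simp; ring
    have e3 : (n - 1) / n = (n - 1) ^ 2 * t := by
      rw [ht]; field_simp
    rw [e2, e1, e3,
      Real.sqrt_mul (sq_nonneg _), Real.sqrt_mul (sq_nonneg _),
      Real.sqrt_mul (sq_nonneg _),
      Real.sqrt_sq (by linarith : (0:ℝ) ≤ n - 2),
      Real.sqrt_sq (by linarith : (0:ℝ) ≤ n),
      Real.sqrt_sq (by linarith : (0:ℝ) ≤ n - 1)]
    ring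
end

section
/- Let P ≥ 1, let z₁, …, z_P ∈ ℂ be pairwise distinct, and let r₁, …, r_P ∈ ℂ be all nonzero. Define P × P complex matrices D₁ and D₂ by (D₁)_{ij} = ∑_{p=1}^P r_p · z_p^{i+j} and (D₂)_{ij} = ∑_{p=1}^P r_p · z_p^{i+j+1} for i, j ∈ {0, …, P−1}. Then D₁ is invertible and the spectrum of D₂·D₁⁻¹ is exactly {z₁, …, z_P}; i.e., a complex number w is an eigenvalue of D₂·D₁⁻¹ if and only if w = z_p for some p. (Indeed D₂·D₁⁻¹ is similar to diag(z₁, …, z_P).) -/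
open Matrix in


/-- For the shifted matrix-pencil matrices `(D₁)_{ij} = ∑_p r_p z_p^{i+j}` and
`(D₂)_{ij} = ∑_p r_p z_p^{i+j+1}` built from pairwise distinct modes with nonzero amplitudes,
`D₁` is invertible and the spectrum of `D₂·D₁⁻¹` is exactly `{z₁, …, z_P}`
(Eqs. (65)–(76) of the paper: the eigenvalues of the shifted pencil recover the modes). -/
theorem matrix_pencil_spectrum
    (P : ℕ) (hP : 1 ≤ P) (z r : Fin P → ℂ)
    (hz : Function.Injective z) (hr : ∀ p, r p ≠ 0) :
    IsUnit (Matrix.of fun i j : Fin P => ∑ p, r p * z p ^ ((i : ℕ) + (j : ℕ))) ∧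
    spectrum ℂ
        ((Matrix.of fun i j : Fin P => ∑ p, r p * z p ^ ((i : ℕ) + (j : ℕ) + 1))
          * (Matrix.of fun i j : Fin P => ∑ p, r p * z p ^ ((i : ℕ) + (j : ℕ)))⁻¹)
      = Set.range z := by
  classical
  set W : Matrix (Fin P) (Fin P) ℂ := (Matrix.vandermonde z)ᵀ with hWdef
  have hWdet : W.det ≠ 0 := by
    rw [hWdef, Matrix.det_transpose]
    exact Matrix.det_vandermonde_ne_zero_iff.mpr hz
  have hWTdet : Wᵀ.det ≠ 0 := by rw [Matrix.det_transpose]; exact hWdet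
  have hRdet : (Matrix.diagonal r).det ≠ 0 := by
    rw [Matrix.det_diagonal]
    exact Finset.prod_ne_zero_iff.mpr fun p _ => hr p
  have hD1 : (Matrix.of fun i j : Fin P => ∑ p, r p * z p ^ ((i : ℕ) + (j : ℕ)))
      = W * Matrix.diagonal r * Wᵀ := by
    ext i j
    simp [Matrix.mul_apply, Matrix.diagonal, Matrix.vandermonde, hWdef, pow_add]
    ring_nf
    apply Finset.sum_congr rfl
    intro p _
    ring
  have hD2 : (Matrix.of fun i j : Fin P => ∑ p, r p * z p ^ ((i : ℕ) + (j : ℕ) + 1))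
      = W * Matrix.diagonal z * (Matrix.diagonal r) * Wᵀ := by
    ext i j
    simp [Matrix.mul_apply, Matrix.diagonal, Matrix.vandermonde, hWdef, pow_add, pow_succ]
    apply Finset.sum_congr rfl
    intro p _
    ring
  have hD1det : ((Matrix.of fun i j : Fin P => ∑ p, r p * z p ^ ((i : ℕ) + (j : ℕ))) :
      Matrix (Fin P) (Fin P) ℂ).det ≠ 0 := by
    rw [hD1, Matrix.det_mul, Matrix.det_mul]
    exact mul_ne_zero (mul_ne_zero hWdet hRdet) hWTdet
  have hUnit : IsUnit (Matrix.of fun i j : Fin P => ∑ p, r p * z p ^ ((i : ℕ) + (j : ℕ))) :=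
    (Matrix.isUnit_iff_isUnit_det _).mpr (isUnit_iff_ne_zero.mpr hD1det)
  refine ⟨hUnit, ?_⟩
  have hWunit : IsUnit W := (Matrix.isUnit_iff_isUnit_det _).mpr (isUnit_iff_ne_zero.mpr hWdet)
  have key : (Matrix.of fun i j : Fin P => ∑ p, r p * z p ^ ((i : ℕ) + (j : ℕ) + 1))
        * (Matrix.of fun i j : Fin P => ∑ p, r p * z p ^ ((i : ℕ) + (j : ℕ)))⁻¹
      = W * Matrix.diagonal z * W⁻¹ := by
    rw [hD1, hD2, Matrix.mul_inv_rev, Matrix.mul_inv_rev]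
    have h1 : Wᵀ * (Wᵀ)⁻¹ = 1 :=
      Matrix.mul_nonsing_inv _ (isUnit_iff_ne_zero.mpr hWTdet)
    have h2 : Matrix.diagonal r * (Matrix.diagonal r)⁻¹ = 1 :=
      Matrix.mul_nonsing_inv _ (isUnit_iff_ne_zero.mpr hRdet)
    calc W * Matrix.diagonal z * Matrix.diagonal r * Wᵀ *
          ((Wᵀ)⁻¹ * ((Matrix.diagonal r)⁻¹ * W⁻¹))
        = W * Matrix.diagonal z *
            ((Matrix.diagonal r * (Wᵀ * (Wᵀ)⁻¹)) * (Matrix.diagonal r)⁻¹) * W⁻¹ := by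
          simp only [Matrix.mul_assoc]
      _ = W * Matrix.diagonal z * W⁻¹ := by rw [h1, mul_one, h2, mul_one]
  have hc := spectrum.units_conjugate (R := ℂ) (a := Matrix.diagonal z) (u := hWunit.unit)
  rw [Matrix.coe_units_inv, IsUnit.unit_spec] at hc
  rw [key, hc, spectrum_diagonal]
end

section
/- Let P ≥ 1, let z₁, …, z_P ∈ ℂ be pairwise distinct with z_p ≠ 1 for all p, let r₁, …, r_P ∈ ℂ be all nonzero, and let c ∈ ℂ be arbitrary. Define the P × (P+1) matrices D̃₁ and D̃₂ by (D̃₁)_{ij} = c + ∑_{p=1}^P r_p z_p^{i+j} and (D̃₂)_{ij} = c + ∑_{p=1}^P r_p z_p^{i+j+1} for i ∈ {0,…,P−1}, j ∈ {0,…,P}. Let Δ = D̃₂ − D̃₁, let Δ_L be the P × P submatrix of Δ consisting of columns 0,…,P−1 and Δ_R the P × P submatrix consisting of columns 1,…,P. Then Δ has entries Δ_{ij} = ∑_p r_p (z_p − 1) z_p^{i+j} (the constant offset c cancels), Δ_L is invertible, and the spectrum of Δ_R·Δ_L⁻¹ is exactly {z₁, …, z_P}. -/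
open Matrix

/-- Key step of Theorem 1 of the paper (Appendix, Eqs. (87)–(93)).  The observed
`P × (P+1)` MP matrices `(D̃₁)_{ij} = c + ∑_p r_p z_p^{i+j}` and
`(D̃₂)_{ij} = c + ∑_p r_p z_p^{i+j+1}` carry a constant error `c`; their difference
`Δ = D̃₂ − D̃₁` has entries `∑_p r_p(z_p − 1)z_p^{i+j}` (the offset cancels), its left `P × P`
sub-block `Δ_L` is invertible, and the spectrum of `Δ_R·Δ_L⁻¹` is exactly `{z₁, …, z_P}`. -/
theorem matrix_pencil_constant_error_cancels
    (P : ℕ) (hP : 1 ≤ P) (z r : Fin P → ℂ) (c : ℂ)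
    (hz : Function.Injective z) (hz1 : ∀ p, z p ≠ 1) (hr : ∀ p, r p ≠ 0) :
    let D1 : Matrix (Fin P) (Fin (P + 1)) ℂ :=
      Matrix.of fun i j => c + ∑ p, r p * z p ^ ((i : ℕ) + (j : ℕ))
    let D2 : Matrix (Fin P) (Fin (P + 1)) ℂ :=
      Matrix.of fun i j => c + ∑ p, r p * z p ^ ((i : ℕ) + (j : ℕ) + 1)
    let Δ : Matrix (Fin P) (Fin (P + 1)) ℂ := D2 - D1
    let ΔL : Matrix (Fin P) (Fin P) ℂ := Matrix.of fun i j => Δ i j.castSucc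
    let ΔR : Matrix (Fin P) (Fin P) ℂ := Matrix.of fun i j => Δ i j.succ
    (∀ i j, Δ i j = ∑ p, r p * (z p - 1) * z p ^ ((i : ℕ) + (j : ℕ))) ∧
    IsUnit ΔL ∧
    spectrum ℂ (ΔR * ΔL⁻¹) = Set.range z := by
  intro D1 D2 Δ ΔL ΔR
  have hΔ : ∀ i j, Δ i j = ∑ p, r p * (z p - 1) * z p ^ ((i : ℕ) + (j : ℕ)) := by
    intro i j
    simp only [Δ, D1, D2, Matrix.sub_apply, Matrix.of_apply]
    rw [add_sub_add_left_eq_sub, ← Finset.sum_sub_distrib]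
    exact Finset.sum_congr rfl fun p _ => by ring
  set d : Fin P → ℂ := fun p => r p * (z p - 1) with hd
  have hd0 : ∀ p, d p ≠ 0 := fun p => mul_ne_zero (hr p) (sub_ne_zero.mpr (hz1 p))
  set W : Matrix (Fin P) (Fin P) ℂ := (Matrix.vandermonde z)ᵀ with hW
  have hWdet : W.det ≠ 0 := by
    rw [hW, Matrix.det_transpose]
    exact Matrix.det_vandermonde_ne_zero_iff.mpr hz
  have hWu : IsUnit W := (Matrix.isUnit_iff_isUnit_det W).mpr hWdet.isUnit
  have hWTdet : Wᵀ.det ≠ 0 := by rwa [Matrix.det_transpose]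
  have gen : ∀ (v : Fin P → ℂ) (i j : Fin P),
      (W * Matrix.diagonal v * Wᵀ) i j = ∑ p, v p * z p ^ ((i : ℕ) + (j : ℕ)) := by
    intro v i j
    rw [Matrix.mul_apply]
    simp only [Matrix.mul_diagonal, Matrix.transpose_apply, hW, Matrix.vandermonde_apply]
    exact Finset.sum_congr rfl fun p _ => by rw [pow_add]; ring
  have hL : ΔL = W * Matrix.diagonal d * Wᵀ := by
    ext i j
    rw [gen]
    simp only [ΔL, Matrix.of_apply, hΔ, Fin.coe_castSucc]
    rfl
  have hR : ΔR = W * Matrix.diagonal (fun p => d p * z p) * Wᵀ := by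
    ext i j
    rw [gen]
    simp only [ΔR, Matrix.of_apply, hΔ, Fin.val_succ]
    refine Finset.sum_congr rfl fun p _ => by
      rw [← Nat.add_assoc, pow_add, pow_add, pow_one]; ring
  have hDu : IsUnit (Matrix.diagonal d) := by
    rw [Matrix.isUnit_iff_isUnit_det, Matrix.det_diagonal]
    exact (Finset.prod_ne_zero_iff.mpr fun p _ => hd0 p).isUnit
  have hLu : IsUnit ΔL := by
    rw [hL]
    exact (hWu.mul hDu).mul ((Matrix.isUnit_iff_isUnit_det _).mpr hWTdet.isUnit)
  refine ⟨hΔ, hLu, ?_⟩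
  have hinv : ΔL⁻¹ = Wᵀ⁻¹ * (Matrix.diagonal d)⁻¹ * W⁻¹ := by
    rw [hL, Matrix.mul_inv_rev, Matrix.mul_inv_rev, mul_assoc]
  have hDinv : (Matrix.diagonal d)⁻¹ = Matrix.diagonal (fun p => (d p)⁻¹) := by
    refine Matrix.inv_eq_right_inv ?_
    rw [Matrix.diagonal_mul_diagonal, ← Matrix.diagonal_one]
    exact congrArg Matrix.diagonal (funext fun p => mul_inv_cancel₀ (hd0 p))
  have hfun : (fun p => d p * z p * (d p)⁻¹) = z := by
    funext p
    rw [mul_right_comm, mul_inv_cancel₀ (hd0 p), one_mul]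
  have hdinv : Matrix.diagonal (fun p => d p * z p) * (Matrix.diagonal d)⁻¹
      = Matrix.diagonal z := by
    rw [hDinv, Matrix.diagonal_mul_diagonal]
    exact congrArg _ hfun
  have key : ΔR * ΔL⁻¹ = W * Matrix.diagonal z * W⁻¹ := by
    rw [hR, hinv]
    calc W * Matrix.diagonal (fun p => d p * z p) * Wᵀ * (Wᵀ⁻¹ * (Matrix.diagonal d)⁻¹ * W⁻¹)
        = W * Matrix.diagonal (fun p => d p * z p) * (Wᵀ * Wᵀ⁻¹) * (Matrix.diagonal d)⁻¹ * W⁻¹ := by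
          simp only [mul_assoc]
      _ = W * (Matrix.diagonal (fun p => d p * z p) * (Matrix.diagonal d)⁻¹) * W⁻¹ := by
          rw [Matrix.mul_nonsing_inv _ hWTdet.isUnit, mul_one, mul_assoc W]
      _ = W * Matrix.diagonal z * W⁻¹ := by rw [hdinv, mul_assoc]
  have hu : (hWu.unit : Matrix (Fin P) (Fin P) ℂ) = W := hWu.unit_spec
  have hu2 : W * Matrix.diagonal z * W⁻¹
      = (hWu.unit : Matrix (Fin P) (Fin P) ℂ) * Matrix.diagonal z
        * ((hWu.unit⁻¹ : (Matrix (Fin P) (Fin P) ℂ)ˣ) : Matrix (Fin P) (Fin P) ℂ) := by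
    rw [Matrix.coe_units_inv, hu]
  rw [key, hu2, spectrum.units_conjugate, spectrum_diagonal]
end

section
/- Let D_h > 0 and D_v > 0. For all θ, φ ∈ ℝ and all a ∈ [−D_h/2, D_h/2], b ∈ [−D_v/2, D_v/2], setting Ψ = sin θ · sin φ · a + cos θ · b and Υ = a² + b², one has 0 ≤ Υ − Ψ² ≤ (D_h² + D_v²)/4. Moreover the upper bound is attained: at θ = π/2, φ = 0, a = D_h/2, b = D_v/2 one has Υ − Ψ² = (D_h² + D_v²)/4. -/
/-- Bounds on `Υ − Ψ²` for `Ψ = sinθ·sinφ·a + cosθ·b`, `Υ = a² + b²` with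
offsets `a ∈ [−D_h/2, D_h/2]`, `b ∈ [−D_v/2, D_v/2]` (Eqs. (8)–(9), (16)–(17) of the paper):
`0 ≤ Υ − Ψ² ≤ (D_h² + D_v²)/4`, with the upper bound attained at
`θ = π/2, φ = 0, a = D_h/2, b = D_v/2`. -/
theorem farfield_phase_discrepancy_bounds (Dh Dv : ℝ) (hDh : 0 < Dh) (hDv : 0 < Dv) :
    (∀ θ φ a b : ℝ, a ∈ Set.Icc (-(Dh / 2)) (Dh / 2) → b ∈ Set.Icc (-(Dv / 2)) (Dv / 2) →
      0 ≤ (a ^ 2 + b ^ 2) - (Real.sin θ * Real.sin φ * a + Real.cos θ * b) ^ 2 ∧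
      (a ^ 2 + b ^ 2) - (Real.sin θ * Real.sin φ * a + Real.cos θ * b) ^ 2
        ≤ (Dh ^ 2 + Dv ^ 2) / 4) ∧
    ((Dh / 2) ^ 2 + (Dv / 2) ^ 2)
        - (Real.sin (Real.pi / 2) * Real.sin 0 * (Dh / 2)
            + Real.cos (Real.pi / 2) * (Dv / 2)) ^ 2
      = (Dh ^ 2 + Dv ^ 2) / 4 := by
  constructor
  · intro θ φ a b ha hb
    obtain ⟨ha1, ha2⟩ := ha
    obtain ⟨hb1, hb2⟩ := hb
    have hs := Real.sin_sq_add_cos_sq θ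
    have hφ := Real.sin_sq_le_one φ
    have hθ := sq_nonneg (Real.sin θ)
    constructor
    · nlinarith [sq_nonneg (Real.sin θ * Real.sin φ * b - Real.cos θ * a),
        sq_nonneg (Real.sin θ * Real.sin φ * a + Real.cos θ * b),
        sq_nonneg a, sq_nonneg b, sq_nonneg (Real.cos θ),
        mul_nonneg (mul_nonneg (sq_nonneg (Real.sin θ)) (sub_nonneg.2 hφ))
          (by positivity : (0:ℝ) ≤ a ^ 2 + b ^ 2)]
    · nlinarith [sq_nonneg (Real.sin θ * Real.sin φ * b - Real.cos θ * a),
        sq_nonneg (Real.sin θ * Real.sin φ * a + Real.cos θ * b),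
        sq_nonneg a, sq_nonneg b, sq_nonneg (Real.cos θ)]
  · simp [Real.sin_pi_div_two, Real.cos_pi_div_two]
    ring
end
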